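/- arXiv:2012.10510 — 2 statements merged into one kernel-verified Lean document; each statement's English description precedes it below -/
import Mathlib

section
/- In the group G₃ = ⟨g₁, g₂, g₃ ∣ g₂g₁ = g₁^{-1}g₂, g₃g₁ = g₁^{-1}g₃, g₃g₂ = g₁g₂g₃⟩, for all integers a, b, c, m: if b and c are both even then (g₁^a g₂^b g₃^c)^m = g₁^{ma} g₂^{mb} g₃^{mc}; if b and c are both odd then (g₁^a g₂^b g₃^c)^m = g₁^{ma − ⌊m/2⌋} g₂^{mb} g₃^{mc} (with ⌊m/2⌋ the floor of m/2 in ℤ); and if b + c is odd then (g₁^a g₂^b g₃^c)^m = g₁^{μ(m)·a} g₂^{mb} g₃^{mc}, where μ(m) = 0 if m is even and μ(m) = 1 if m is odd. -/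
/-- The relators `g₂g₁g₂⁻¹g₁`, `g₃g₁g₃⁻¹g₁`, `g₃g₂g₃⁻¹g₂⁻¹g₁⁻¹` presenting the
group `⟨g₁, g₂, g₃ ∣ g₂g₁ = g₁⁻¹g₂, g₃g₁ = g₁⁻¹g₃, g₃g₂ = g₁g₂g₃⟩`. -/
def polyZRelsB1 : Set (FreeGroup (Fin 3)) :=
  {FreeGroup.of 1 * FreeGroup.of 0 * (FreeGroup.of 1)⁻¹ * FreeGroup.of 0,
   FreeGroup.of 2 * FreeGroup.of 0 * (FreeGroup.of 2)⁻¹ * FreeGroup.of 0,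
   FreeGroup.of 2 * FreeGroup.of 1 * (FreeGroup.of 2)⁻¹ * (FreeGroup.of 1)⁻¹ * (FreeGroup.of 0)⁻¹}

/-- `μ x = 0` if `x` is even and `μ x = 1` if `x` is odd. -/
def μ (x : ℤ) : ℤ := if Even x then 0 else 1

/-!
Conjugation by `g₂` or by `g₃` inverts `g₁`, and `g₃^c g₂^b g₃^(-c) = g₁^(μ(b) μ(c)) g₂^b`.
Hence elements in the normal form `g₁^a g₂^b g₃^c` multiply by the rule
`(a, b, c) · (a', b', c') = (a + (-1)^(b+c) a' + (-1)^b μ(b') μ(c), b + b', c + c')`,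
so `(g₁^a g₂^b g₃^c)^m = g₁^f(m) g₂^(mb) g₃^(mc)` for any `f` with `f 0 = 0` obeying the
recursion `f (m + 1) = f m + ...` read off from this rule. In each of the three parity cases the
claimed exponent satisfies that recursion.
-/

theorem μ_of_even {n : ℤ} (h : Even n) : μ n = 0 := if_pos h

theorem μ_of_odd {n : ℤ} (h : Odd n) : μ n = 1 := if_neg (Int.not_even_iff_odd.mpr h)

theorem μ_add_one (n : ℤ) : μ (n + 1) = μ n + n.negOnePow := by
  rcases Int.even_or_odd n with h | h
  · rw [μ_of_odd h.add_one, μ_of_even h, Int.negOnePow_even n h]; rfl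
  · rw [μ_of_even h.add_one, μ_of_odd h, Int.negOnePow_odd n h]; rfl

theorem μ_mul (m n : ℤ) : μ (m * n) = μ m * μ n := by
  unfold μ; split_ifs <;> simp_all [Int.even_mul]

theorem fdiv_two_add_one (m : ℤ) : (m + 1).fdiv 2 = m.fdiv 2 + μ m := by
  rw [Int.fdiv_eq_ediv_of_nonneg _ zero_le_two, Int.fdiv_eq_ediv_of_nonneg _ zero_le_two]
  rcases Int.even_or_odd m with hm | hm
  · rw [μ_of_even hm]; obtain ⟨k, rfl⟩ := hm; omega
  · rw [μ_of_odd hm]; obtain ⟨k, rfl⟩ := hm; omega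

section Group

variable {G : Type*} [Group G]

theorem zpow_eq_of_mul_eq {w : G} {u : ℤ → G} (h₀ : u 0 = 1) (hs : ∀ m, u m * w = u (m + 1))
    (m : ℤ) : w ^ m = u m := by
  induction m using Int.induction_on with
  | zero => rw [zpow_zero, h₀]
  | succ n ih => rw [zpow_add_one, ih, hs]
  | pred n ih =>
    have hs' := hs (-n - 1)
    rw [sub_add_cancel] at hs'
    rw [zpow_sub_one, ih, ← hs', mul_inv_cancel_right]

variable {x y : G}

theorem zpow_conj_eq_zpow_negOnePow (h : y * x * y⁻¹ = x⁻¹) (b : ℤ) :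
    y ^ b * x * (y ^ b)⁻¹ = x ^ (b.negOnePow : ℤ) := by
  have h' : y⁻¹ * x * y⁻¹⁻¹ = x⁻¹ :=
    calc y⁻¹ * x * y⁻¹⁻¹ = y⁻¹ * (y * x * y⁻¹)⁻¹ * y := by rw [h]; group
      _ = x⁻¹ := by group
  induction b using Int.induction_on with
  | zero => simp
  | succ n ih =>
    rw [Int.negOnePow_succ, Units.val_neg, zpow_neg, ← inv_zpow x, ← h, conj_zpow, ← ih]
    group
  | pred n ih =>
    rw [Int.negOnePow_sub, Int.negOnePow_one, mul_neg_one, Units.val_neg, zpow_neg, ← inv_zpow x,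
      ← h', conj_zpow, ← ih]
    group

theorem zpow_mul_zpow_of_conj_eq_inv (h : y * x * y⁻¹ = x⁻¹) (a b : ℤ) :
    y ^ b * x ^ a = x ^ (b.negOnePow * a) * y ^ b := by
  rw [zpow_mul, ← zpow_conj_eq_zpow_negOnePow h, conj_zpow, inv_mul_cancel_right]

theorem mul_zpow_of_conj_eq_inv (h : y * x * y⁻¹ = x⁻¹) (b : ℤ) :
    (x * y) ^ b = x ^ μ b * y ^ b := by
  refine zpow_eq_of_mul_eq (u := fun m => x ^ μ m * y ^ m) (by simp [μ]) (fun m => ?_) b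
  calc x ^ μ m * y ^ m * (x * y) = x ^ μ m * (y ^ m * x ^ (1 : ℤ)) * y := by group
    _ = x ^ (μ m + m.negOnePow) * y ^ (m + 1) := by
      rw [zpow_mul_zpow_of_conj_eq_inv h, mul_one, zpow_add, zpow_add_one]; group
    _ = x ^ μ (m + 1) * y ^ (m + 1) := by rw [μ_add_one]

end Group

namespace PolyZB1

abbrev G₃ := PresentedGroup polyZRelsB1

def g₁ : G₃ := PresentedGroup.of 0
def g₂ : G₃ := PresentedGroup.of 1
def g₃ : G₃ := PresentedGroup.of 2

theorem g₂_conj_g₁ : g₂ * g₁ * g₂⁻¹ = g₁⁻¹ :=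
  eq_inv_of_mul_eq_one_left (PresentedGroup.one_of_mem (Or.inl rfl))

theorem g₃_conj_g₁ : g₃ * g₁ * g₃⁻¹ = g₁⁻¹ :=
  eq_inv_of_mul_eq_one_left (PresentedGroup.one_of_mem (Or.inr (Or.inl rfl)))

theorem g₃_mul_g₂ : g₃ * g₂ = g₁ * g₂ * g₃ :=
  mul_inv_eq_iff_eq_mul.mp <| mul_inv_eq_iff_eq_mul.mp <| mul_inv_eq_one.mp <|
    PresentedGroup.one_of_mem (Or.inr (Or.inr rfl))

theorem g₂_zpow_mul_g₁_zpow (a b : ℤ) :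
    g₂ ^ b * g₁ ^ a = g₁ ^ (b.negOnePow * a) * g₂ ^ b :=
  zpow_mul_zpow_of_conj_eq_inv g₂_conj_g₁ a b

theorem g₃_zpow_mul_g₁_zpow (a c : ℤ) :
    g₃ ^ c * g₁ ^ a = g₁ ^ (c.negOnePow * a) * g₃ ^ c :=
  zpow_mul_zpow_of_conj_eq_inv g₃_conj_g₁ a c

theorem g₃_zpow_conj_g₂ (c : ℤ) : g₃ ^ c * g₂ * (g₃ ^ c)⁻¹ = g₁ ^ μ c * g₂ := by
  have hg₃ : g₃ * g₁⁻¹ * g₃⁻¹ = g₁⁻¹⁻¹ := by rw [← conj_inv, g₃_conj_g₁]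
  have hg₂ : g₂ * g₃ * g₂⁻¹ = g₁⁻¹ * g₃ := by
    rw [mul_inv_eq_iff_eq_mul, mul_assoc g₁⁻¹, g₃_mul_g₂]; group
  have h : g₂ * g₃ ^ c = g₁⁻¹ ^ μ c * g₃ ^ c * g₂ := by
    rw [← mul_zpow_of_conj_eq_inv hg₃, hg₂.symm, conj_zpow]; group
  rw [mul_inv_eq_iff_eq_mul, mul_assoc (g₁ ^ μ c), h]
  group

theorem g₃_zpow_mul_g₂_zpow (b c : ℤ) :
    g₃ ^ c * g₂ ^ b = g₁ ^ (μ b * μ c) * g₂ ^ b * g₃ ^ c := by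
  have h : g₂ * g₁ ^ μ c * g₂⁻¹ = (g₁ ^ μ c)⁻¹ := by rw [← conj_zpow, g₂_conj_g₁, inv_zpow]
  rw [mul_comm (μ b), zpow_mul, ← mul_zpow_of_conj_eq_inv h, ← g₃_zpow_conj_g₂, conj_zpow,
    inv_mul_cancel_right]

def normalForm (a b c : ℤ) : G₃ := g₁ ^ a * g₂ ^ b * g₃ ^ c

theorem normalForm_mul (a b c a' b' c' : ℤ) :
    normalForm a b c * normalForm a' b' c' =
      normalForm (a + (b + c).negOnePow * a' + b.negOnePow * (μ b' * μ c)) (b + b') (c + c') := by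
  simp only [normalForm]
  calc g₁ ^ a * g₂ ^ b * g₃ ^ c * (g₁ ^ a' * g₂ ^ b' * g₃ ^ c')
      = g₁ ^ a * g₂ ^ b * (g₃ ^ c * g₁ ^ a') * g₂ ^ b' * g₃ ^ c' := by group
    _ = g₁ ^ a * (g₂ ^ b * g₁ ^ (c.negOnePow * a')) * (g₃ ^ c * g₂ ^ b') * g₃ ^ c' := by
      rw [g₃_zpow_mul_g₁_zpow]; group
    _ = g₁ ^ a * g₁ ^ (b.negOnePow * (c.negOnePow * a')) * (g₂ ^ b * g₁ ^ (μ b' * μ c)) *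
          g₂ ^ b' * (g₃ ^ c * g₃ ^ c') := by
      rw [g₂_zpow_mul_g₁_zpow, g₃_zpow_mul_g₂_zpow]; group
    _ = _ := by
      rw [g₂_zpow_mul_g₁_zpow, Int.negOnePow_add, Units.val_mul]
      group

theorem normalForm_zpow {a b c : ℤ} (f : ℤ → ℤ) (h₀ : f 0 = 0)
    (hs : ∀ m, f m + (m * b + m * c).negOnePow * a + (m * b).negOnePow * (μ b * μ (m * c)) =
      f (m + 1)) (m : ℤ) :
    normalForm a b c ^ m = normalForm (f m) (m * b) (m * c) :=
  zpow_eq_of_mul_eq (u := fun m => normalForm (f m) (m * b) (m * c))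
    (by simp [normalForm, h₀]) (fun m => by rw [normalForm_mul, hs, add_one_mul, add_one_mul]) m

theorem normalForm_zpow_of_even_of_even (a m : ℤ) {b c : ℤ} (hb : Even b) (hc : Even c) :
    normalForm a b c ^ m = normalForm (m * a) (m * b) (m * c) := by
  refine normalForm_zpow (fun m => m * a) (zero_mul a) (fun m => ?_) m
  rw [← mul_add, Int.negOnePow_even _ ((hb.add hc).mul_left m), μ_of_even hb, Units.val_one]
  ring

theorem normalForm_zpow_of_odd_of_odd (a m : ℤ) {b c : ℤ} (hb : Odd b) (hc : Odd c) :
    normalForm a b c ^ m = normalForm (m * a - m.fdiv 2) (m * b) (m * c) := by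
  refine normalForm_zpow (fun m => m * a - m.fdiv 2) (by simp) (fun m => ?_) m
  rw [← mul_add, Int.negOnePow_even _ ((hb.add_odd hc).mul_left m), μ_of_odd hb,
    fdiv_two_add_one, μ_mul, μ_of_odd hc]
  rcases Int.even_or_odd m with hm | hm
  · rw [μ_of_even hm, Units.val_one]; ring
  · rw [μ_of_odd hm, Int.negOnePow_odd _ (hm.mul hb)]; push_cast; ring

theorem normalForm_zpow_of_odd_add (a m : ℤ) {b c : ℤ} (hbc : Odd (b + c)) :
    normalForm a b c ^ m = normalForm (μ m * a) (m * b) (m * c) := by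
  have hμ : μ b * μ c = 0 := by
    rcases Int.even_or_odd b with hb | hb
    · rw [μ_of_even hb, zero_mul]
    · rw [μ_of_even (n := c) (by simpa [Int.odd_add, hb] using hbc), mul_zero]
  refine normalForm_zpow (fun m => μ m * a) (by simp [μ]) (fun m => ?_) m
  rw [← mul_add, μ_mul, mul_left_comm (μ b), hμ, mul_zero, mul_zero, add_zero, μ_add_one,
    add_mul]
  congr 3
  rcases Int.even_or_odd m with hm | hm
  · rw [Int.negOnePow_even _ (hm.mul_right _), Int.negOnePow_even _ hm]
  · rw [Int.negOnePow_odd _ (hm.mul hbc), Int.negOnePow_odd _ hm]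

end PolyZB1

/-- In `G₃ = ⟨g₁, g₂, g₃ ∣ g₂g₁ = g₁⁻¹g₂, g₃g₁ = g₁⁻¹g₃, g₃g₂ = g₁g₂g₃⟩`,
for all integers `a, b, c, m`: if `b, c` are both even then
`(g₁^a g₂^b g₃^c)^m = g₁^(ma) g₂^(mb) g₃^(mc)`; if `b, c` are both odd then
`(g₁^a g₂^b g₃^c)^m = g₁^(ma - ⌊m/2⌋) g₂^(mb) g₃^(mc)`; and if `b + c` is odd
then `(g₁^a g₂^b g₃^c)^m = g₁^(μ(m)·a) g₂^(mb) g₃^(mc)`. -/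
theorem polyZ_b1_pow (a b c m : ℤ) :
    letI G₃ := PresentedGroup polyZRelsB1
    letI g₁ : G₃ := PresentedGroup.of 0
    letI g₂ : G₃ := PresentedGroup.of 1
    letI g₃ : G₃ := PresentedGroup.of 2
    (Even b → Even c →
      (g₁ ^ a * g₂ ^ b * g₃ ^ c) ^ m = g₁ ^ (m * a) * g₂ ^ (m * b) * g₃ ^ (m * c)) ∧
    (Odd b → Odd c →
      (g₁ ^ a * g₂ ^ b * g₃ ^ c) ^ m =
        g₁ ^ (m * a - Int.fdiv m 2) * g₂ ^ (m * b) * g₃ ^ (m * c)) ∧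
    (Odd (b + c) →
      (g₁ ^ a * g₂ ^ b * g₃ ^ c) ^ m = g₁ ^ (μ m * a) * g₂ ^ (m * b) * g₃ ^ (m * c)) :=
  ⟨PolyZB1.normalForm_zpow_of_even_of_even a m, PolyZB1.normalForm_zpow_of_odd_of_odd a m,
    PolyZB1.normalForm_zpow_of_odd_add a m⟩
end

section
/- Let G₃ = ⟨g₁, g₂, g₃ ∣ g₂g₁ = g₁^{-1}g₂, g₃g₁ = g₁^{-1}g₃, g₃g₂ = g₁g₂g₃⟩. A map ψ : G₃ → G₃ is an automorphism if and only if there exist a, e, f, h, i ∈ ℤ with e·i − f·h = ±1 such that ψ(g₂) = g₁^{d₂} g₂^{e} g₃^{f} and ψ(g₃) = g₁^{d₃} g₂^{h} g₃^{i}, where the parities and the values of ψ(g₁), d₂, d₃ fall into one of four families: (α) ψ(g₁) = g₁, e, i even, f, h odd, d₂ = a, d₃ = a+1; (β) ψ(g₁) = g₁^{-1}, e, i even, f, h odd, d₂ = d₃ = a; (γ) ψ(g₁) = g₁, e, i odd, f, h even, d₂ = d₃ = a; (δ) ψ(g₁) = g₁^{-1}, e, i odd, f, h even, d₂ = a, d₃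 = a−1. -/
/-!
Every element of `G₃` has a unique normal form `g₁^x g₂^y g₃^z`, so `G₃` is `ℤ³` with the
multiplication `(x, y, z)(x', y', z') = (x + (-1)^(y+z) x' + (-1)^y [z, y' odd], y + y', z + z')`,
and endomorphisms can be computed in coordinates. As `g₁ = [g₃, g₂]` generates the kernel of
`(x, y, z) ↦ (y, z)`, an endomorphism sends `g₁` to some `g₁^p` and induces an integer
`2 × 2` matrix on `ℤ²`; it is bijective iff `p = ±1` and the matrix is unimodular. The first two
relations force `e + f` and `h + i` to be odd, and the `x`-coordinate of the third one,
`2 (d₃ - d₂) = p + [f, h odd] - [i, e odd]`, leaves exactly the four families.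
-/

namespace PolyZB1

/-- The exponent of `g₁` in `g₃ ^ z * g₂ ^ y = g₁ ^ twist z y * g₂ ^ y * g₃ ^ z`. -/
def twist (z y : ℤ) : ℤ := if Even z ∨ Even y then 0 else 1

lemma coe_negOnePow_eq_ite (n : ℤ) : (n.negOnePow : ℤ) = if Even n then 1 else -1 := by
  by_cases h : Even n
  · simp [h, Int.negOnePow_even]
  · simp [h, Int.negOnePow_odd _ (Int.not_even_iff_odd.mp h)]

lemma twist_of_even_left {z : ℤ} (hz : Even z) (y : ℤ) : twist z y = 0 := by simp [twist, hz]

lemma twist_of_even_right {y : ℤ} (z : ℤ) (hy : Even y) : twist z y = 0 := by simp [twist, hy]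

lemma twist_of_odd_of_odd {z y : ℤ} (hz : Odd z) (hy : Odd y) : twist z y = 1 := by
  simp [twist, Int.not_even_iff_odd.mpr hz, Int.not_even_iff_odd.mpr hy]

@[simp] lemma twist_zero_left (y : ℤ) : twist 0 y = 0 := twist_of_even_left Even.zero y

@[simp] lemma twist_zero_right (z : ℤ) : twist z 0 = 0 := twist_of_even_right z Even.zero

lemma twist_cocycle (a b c d : ℤ) :
    (b.negOnePow : ℤ) * twist (a + c) d + twist a b =
      (a.negOnePow : ℤ) * b.negOnePow * twist c d + twist a (b + d) := by
  by_cases ha : Even a <;> by_cases hb : Even b <;> by_cases hc : Even c <;>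
    by_cases hd : Even d <;> simp [twist, coe_negOnePow_eq_ite, Int.even_add, ha, hb, hc, hd]

section GroupLemmas

variable {G : Type*} [Group G] {a b c : G}

lemma semiconjBy_of_mul_mul_inv_mul_eq_one (h : b * a * b⁻¹ * c = 1) : SemiconjBy b a c⁻¹ := by
  rw [SemiconjBy, ← mul_inv_eq_iff_eq_mul, eq_inv_iff_mul_eq_one]
  exact h

lemma SemiconjBy.inv_left_of_inv (h : SemiconjBy b a a⁻¹) : SemiconjBy b⁻¹ a a⁻¹ := by
  simpa using h.inv_right.inv_symm_left

lemma SemiconjBy.mul_zpow_of_inv (h : SemiconjBy b a a⁻¹) (n : ℤ) : b * a ^ n = a ^ (-n) * b := by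
  rw [← inv_zpow']
  exact (h.zpow_right n).eq

lemma SemiconjBy.mul_zpow_eq_of_inv (h : SemiconjBy b a a⁻¹) (n : ℤ) :
    (a * b) ^ n = a ^ twist 1 n * b ^ n := by
  have hsq : (a * b) ^ (2 : ℤ) = b ^ (2 : ℤ) := by
    rw [zpow_two, zpow_two, mul_assoc, ← mul_assoc b, h.eq, mul_assoc, mul_inv_cancel_left]
  have hcomm : Commute (b ^ (2 : ℤ)) a := by
    rw [zpow_two]
    exact (show SemiconjBy b a⁻¹ a by simpa using h.inv_right).mul_left h
  obtain ⟨k, rfl | rfl⟩ := Int.even_or_odd' n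
  · rw [twist_of_even_right _ (even_two_mul k), zpow_zero, one_mul, zpow_mul, hsq, ← zpow_mul]
  · rw [twist_of_odd_of_odd odd_one (odd_two_mul_add_one k), zpow_one, zpow_add_one, zpow_mul,
      hsq, zpow_add_one, ← mul_assoc, (hcomm.zpow_left k).eq, mul_assoc, ← zpow_mul]

lemma bijective_conj_iff {K : Type*} [Group K] (Φ : G ≃* K) (ψ : G →* G) :
    Function.Bijective ((Φ.toMonoidHom.comp ψ).comp Φ.symm.toMonoidHom) ↔ Function.Bijective ψ := by
  simp only [MonoidHom.coe_comp, MulEquiv.coe_toMonoidHom]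
  rw [EquivLike.bijective_comp, EquivLike.comp_bijective]

end GroupLemmas

/-- The families `α, β, γ, δ` for the images `P, B, C` of generators `u₁, u₂, u₃`. -/
def AutFamily {H : Type*} [Group H] (u₁ u₂ u₃ P B C : H) (a e f h i : ℤ) : Prop :=
  (P = u₁ ∧ Even e ∧ Even i ∧ Odd f ∧ Odd h ∧
      B = u₁ ^ a * u₂ ^ e * u₃ ^ f ∧ C = u₁ ^ (a + 1) * u₂ ^ h * u₃ ^ i) ∨
  (P = u₁⁻¹ ∧ Even e ∧ Even i ∧ Odd f ∧ Odd h ∧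
      B = u₁ ^ a * u₂ ^ e * u₃ ^ f ∧ C = u₁ ^ a * u₂ ^ h * u₃ ^ i) ∨
  (P = u₁ ∧ Odd e ∧ Odd i ∧ Even f ∧ Even h ∧
      B = u₁ ^ a * u₂ ^ e * u₃ ^ f ∧ C = u₁ ^ a * u₂ ^ h * u₃ ^ i) ∨
  (P = u₁⁻¹ ∧ Odd e ∧ Odd i ∧ Even f ∧ Even h ∧
      B = u₁ ^ a * u₂ ^ e * u₃ ^ f ∧ C = u₁ ^ (a - 1) * u₂ ^ h * u₃ ^ i)

lemma autFamily_map_iff {H K F : Type*} [Group H] [Group K] [FunLike F H K]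
    [MonoidHomClass F H K] (Φ : F) (hΦ : Function.Injective Φ) {u₁ u₂ u₃ P B C : H}
    {a e f h i : ℤ} :
    AutFamily (Φ u₁) (Φ u₂) (Φ u₃) (Φ P) (Φ B) (Φ C) a e f h i ↔
      AutFamily u₁ u₂ u₃ P B C a e f h i := by
  simp only [AutFamily, ← map_zpow, ← map_mul, ← map_inv, hΦ.eq_iff]

lemma AutFamily.image_eq {H : Type*} [Group H] {u₁ u₂ u₃ P B C : H} {a e f h i : ℤ}
    (hfam : AutFamily u₁ u₂ u₃ P B C a e f h i) :
    (P = u₁ ∨ P = u₁⁻¹) ∧ B = u₁ ^ a * u₂ ^ e * u₃ ^ f ∧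
      ∃ d : ℤ, C = u₁ ^ d * u₂ ^ h * u₃ ^ i := by
  rcases hfam with ⟨hP, -, -, -, -, hB, hC⟩ | ⟨hP, -, -, -, -, hB, hC⟩ | ⟨hP, -, -, -, -, hB, hC⟩ |
    ⟨hP, -, -, -, -, hB, hC⟩
  all_goals first
    | exact ⟨Or.inl hP, hB, _, hC⟩
    | exact ⟨Or.inr hP, hB, _, hC⟩

lemma eq_zero_of_isUnit_det {R : Type*} [CommRing R] {a b c d m n : R}
    (hdet : IsUnit (a * d - b * c)) (h₁ : m * a + n * c = 0) (h₂ : m * b + n * d = 0) :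
    m = 0 ∧ n = 0 := by
  constructor
  · rw [← hdet.mul_left_eq_zero]; linear_combination d * h₁ - c * h₂
  · rw [← hdet.mul_left_eq_zero]; linear_combination a * h₂ - b * h₁

lemma exists_eq_of_isUnit_det {R : Type*} [CommRing R] {a b c d : R}
    (hdet : IsUnit (a * d - b * c)) (s t : R) :
    ∃ m n : R, m * a + n * c = s ∧ m * b + n * d = t := by
  obtain ⟨u, hu⟩ := hdet.exists_left_inv
  exact ⟨u * (s * d - t * c), u * (t * a - s * b),
    by linear_combination s * hu, by linear_combination t * hu⟩

/-- `⟨x, y, z⟩` stands for `g₁ ^ x * g₂ ^ y * g₃ ^ z`. -/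
@[ext] structure NormalForm where
  x : ℤ
  y : ℤ
  z : ℤ

namespace NormalForm

instance : Mul NormalForm :=
  ⟨fun a b => ⟨a.x + ((a.y + a.z).negOnePow : ℤ) * b.x + (a.y.negOnePow : ℤ) * twist a.z b.y,
    a.y + b.y, a.z + b.z⟩⟩
instance : One NormalForm := ⟨⟨0, 0, 0⟩⟩
instance : Inv NormalForm :=
  ⟨fun a => ⟨-((a.y + a.z).negOnePow : ℤ) * a.x + twist a.z a.y, -a.y, -a.z⟩⟩

@[simp] lemma mul_x (a b : NormalForm) :
    (a * b).x = a.x + ((a.y + a.z).negOnePow : ℤ) * b.x + (a.y.negOnePow : ℤ) * twist a.z b.y := rfl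
@[simp] lemma mul_y (a b : NormalForm) : (a * b).y = a.y + b.y := rfl
@[simp] lemma mul_z (a b : NormalForm) : (a * b).z = a.z + b.z := rfl
@[simp] lemma one_x : (1 : NormalForm).x = 0 := rfl
@[simp] lemma one_y : (1 : NormalForm).y = 0 := rfl
@[simp] lemma one_z : (1 : NormalForm).z = 0 := rfl
@[simp] lemma inv_x (a : NormalForm) :
    a⁻¹.x = -((a.y + a.z).negOnePow : ℤ) * a.x + twist a.z a.y := rfl
@[simp] lemma inv_y (a : NormalForm) : a⁻¹.y = -a.y := rfl
@[simp] lemma inv_z (a : NormalForm) : a⁻¹.z = -a.z := rfl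

instance : Group NormalForm := Group.ofLeftAxioms
  (fun a b c => by
    ext
    · simp only [mul_x, mul_y, mul_z, Int.negOnePow_add, Units.val_mul]
      linear_combination (a.y.negOnePow : ℤ) * twist_cocycle a.z b.y b.z c.y
    · simp only [mul_y]; ring
    · simp only [mul_z]; ring)
  (fun a => by ext <;> simp [twist])
  (fun a => by
    ext
    · by_cases hy : Even a.y <;> by_cases hz : Even a.z <;>
        simp [twist, coe_negOnePow_eq_ite, Int.even_add, hy, hz]
    · simp
    · simp)

@[simps] def e₁ : NormalForm := ⟨1, 0, 0⟩
@[simps] def e₂ : NormalForm := ⟨0, 1, 0⟩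
@[simps] def e₃ : NormalForm := ⟨0, 0, 1⟩

@[simp] lemma zpow_y (a : NormalForm) (n : ℤ) : (a ^ n).y = n * a.y := by
  induction n using Int.induction_on with
  | zero => simp
  | succ k ih => rw [zpow_add_one, mul_y, ih]; ring
  | pred k ih => rw [zpow_sub_one, mul_y, inv_y, ih]; ring

@[simp] lemma zpow_z (a : NormalForm) (n : ℤ) : (a ^ n).z = n * a.z := by
  induction n using Int.induction_on with
  | zero => simp
  | succ k ih => rw [zpow_add_one, mul_z, ih]; ring
  | pred k ih => rw [zpow_sub_one, mul_z, inv_z, ih]; ring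

lemma e₁_zpow (n : ℤ) : e₁ ^ n = ⟨n, 0, 0⟩ := by
  induction n using Int.induction_on with
  | zero => rfl
  | succ k ih => rw [zpow_add_one, ih]; ext <;> simp [twist]
  | pred k ih => rw [zpow_sub_one, ih]; ext <;> simp [twist, sub_eq_add_neg]

lemma e₂_zpow (n : ℤ) : e₂ ^ n = ⟨0, n, 0⟩ := by
  induction n using Int.induction_on with
  | zero => rfl
  | succ k ih => rw [zpow_add_one, ih]; ext <;> simp [twist]
  | pred k ih => rw [zpow_sub_one, ih]; ext <;> simp [twist, sub_eq_add_neg]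

lemma e₃_zpow (n : ℤ) : e₃ ^ n = ⟨0, 0, n⟩ := by
  induction n using Int.induction_on with
  | zero => rfl
  | succ k ih => rw [zpow_add_one, ih]; ext <;> simp [twist]
  | pred k ih => rw [zpow_sub_one, ih]; ext <;> simp [twist, sub_eq_add_neg]

@[simp] lemma e₁_zpow_mul_e₂_zpow_mul_e₃_zpow (x y z : ℤ) :
    e₁ ^ x * e₂ ^ y * e₃ ^ z = ⟨x, y, z⟩ := by
  rw [e₁_zpow, e₂_zpow, e₃_zpow]; ext <;> simp [twist]

lemma eq_e₁_zpow_mul_e₂_zpow_mul_e₃_zpow (w : NormalForm) : w = e₁ ^ w.x * e₂ ^ w.y * e₃ ^ w.z :=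
  (e₁_zpow_mul_e₂_zpow_mul_e₃_zpow _ _ _).symm

lemma e₁_zpow_mul (n : ℤ) (a : NormalForm) : e₁ ^ n * a = ⟨n + a.x, a.y, a.z⟩ := by
  rw [e₁_zpow]; ext <;> simp [twist]

lemma e₂_mul_e₁ : e₂ * e₁ = e₁⁻¹ * e₂ := by ext <;> simp

lemma e₃_mul_e₁ : e₃ * e₁ = e₁⁻¹ * e₃ := by ext <;> simp

lemma e₃_mul_e₂ : e₃ * e₂ = e₁ * e₂ * e₃ := by ext <;> simp [twist]

lemma e₁_inv : e₁⁻¹ = ⟨-1, 0, 0⟩ := by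
  ext <;> simp

lemma e₁_eq_commutator : e₁ = e₃ * e₂ * e₃⁻¹ * e₂⁻¹ := by
  ext <;> simp [twist]

/-- The determinant of the map that `φ` induces on `⟨x, y, z⟩ ↦ (y, z)`, i.e. on `ℤ²`. -/
def inducedDet (φ : NormalForm →* NormalForm) : ℤ :=
  (φ e₂).y * (φ e₃).z - (φ e₂).z * (φ e₃).y

section Endomorphism

variable (φ : NormalForm →* NormalForm)

lemma map_e₁_y : (φ e₁).y = 0 := by
  rw [e₁_eq_commutator]; simp only [map_mul, map_inv, mul_y, inv_y]; ring

lemma map_e₁_z : (φ e₁).z = 0 := by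
  rw [e₁_eq_commutator]; simp only [map_mul, map_inv, mul_z, inv_z]; ring

lemma map_e₁ : φ e₁ = e₁ ^ (φ e₁).x := by
  rw [e₁_zpow]; ext
  · rfl
  · exact map_e₁_y φ
  · exact map_e₁_z φ

lemma map_y (w : NormalForm) : (φ w).y = w.y * (φ e₂).y + w.z * (φ e₃).y := by
  conv_lhs => rw [eq_e₁_zpow_mul_e₂_zpow_mul_e₃_zpow w]
  simp only [map_mul, map_zpow, mul_y, zpow_y, map_e₁_y]
  ring

lemma map_z (w : NormalForm) : (φ w).z = w.y * (φ e₂).z + w.z * (φ e₃).z := by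
  conv_lhs => rw [eq_e₁_zpow_mul_e₂_zpow_mul_e₃_zpow w]
  simp only [map_mul, map_zpow, mul_z, zpow_z, map_e₁_z]
  ring

lemma isUnit_inducedDet_of_surjective (hφ : Function.Surjective φ) : IsUnit (inducedDet φ) := by
  obtain ⟨v, hv⟩ := hφ e₂
  obtain ⟨w, hw⟩ := hφ e₃
  have hv₂ := map_y φ v
  have hv₃ := map_z φ v
  have hw₃ := map_z φ w
  simp only [hv, hw, e₂_y, e₂_z, e₃_z] at hv₂ hv₃ hw₃
  refine IsUnit.of_mul_eq_one (v.y * w.z - v.z * w.y) ?_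
  unfold inducedDet
  linear_combination (w.y * (φ e₂).y + w.z * (φ e₃).y) * hv₃ -
      (w.y * (φ e₂).z + w.z * (φ e₃).z) * hv₂ - hw₃

lemma map_e₁_eq_or_of_bijective (hφ : Function.Bijective φ) : φ e₁ = e₁ ∨ φ e₁ = e₁⁻¹ := by
  set σ := MulEquiv.ofBijective φ hφ
  have hinv : φ (e₁ ^ (σ.symm e₁).x) = e₁ := by
    have h := map_e₁ σ.symm.toMonoidHom
    rw [MulEquiv.coe_toMonoidHom] at h
    rw [← h]
    exact σ.apply_symm_apply e₁
  rw [map_zpow, map_e₁ φ, ← zpow_mul, e₁_zpow] at hinv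
  have hunit : IsUnit (φ e₁).x :=
    IsUnit.of_mul_eq_one _ (congrArg NormalForm.x hinv)
  rcases Int.isUnit_iff.mp hunit with h | h
  · left; rw [map_e₁ φ, h, zpow_one]
  · right; rw [map_e₁ φ, h, zpow_neg_one]

lemma injective_of_isUnit_inducedDet {p : ℤ} (hp : p * p = 1) (h₁ : φ e₁ = e₁ ^ p)
    (hdet : IsUnit (inducedDet φ)) : Function.Injective φ := by
  rw [injective_iff_map_eq_one]
  intro w hw
  obtain ⟨hwy, hwz⟩ : w.y = 0 ∧ w.z = 0 := eq_zero_of_isUnit_det hdet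
    (by simpa [hw] using (map_y φ w).symm) (by simpa [hw] using (map_z φ w).symm)
  have hw₁ : w = e₁ ^ w.x := by rw [e₁_zpow]; ext <;> simp [hwy, hwz]
  rw [hw₁, map_zpow, h₁, ← zpow_mul, e₁_zpow] at hw
  have hwx : w.x = 0 := by
    have h := congrArg NormalForm.x hw
    simp only [one_x] at h
    linear_combination p * h - w.x * hp
  rw [hw₁, hwx, zpow_zero]

lemma surjective_of_isUnit_inducedDet {p : ℤ} (hp : p * p = 1) (h₁ : φ e₁ = e₁ ^ p)
    (hdet : IsUnit (inducedDet φ)) : Function.Surjective φ := by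
  intro t
  obtain ⟨m, n, hm, hn⟩ := exists_eq_of_isUnit_det hdet t.y t.z
  set w := e₂ ^ m * e₃ ^ n
  have hwy : (φ w).y = t.y := by rw [map_y]; simpa [w] using hm
  have hwz : (φ w).z = t.z := by rw [map_z]; simpa [w] using hn
  refine ⟨e₁ ^ (p * (t.x - (φ w).x)) * w, ?_⟩
  rw [map_mul, map_zpow, h₁, ← zpow_mul, ← mul_assoc, hp, one_mul, e₁_zpow_mul]
  ext <;> simp [hwy, hwz]

lemma bijective_of_isUnit_inducedDet (h₁ : φ e₁ = e₁ ∨ φ e₁ = e₁⁻¹)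
    (hdet : IsUnit (inducedDet φ)) : Function.Bijective φ := by
  obtain ⟨p, hp, hφ₁⟩ : ∃ p : ℤ, p * p = 1 ∧ φ e₁ = e₁ ^ p := by
    rcases h₁ with h | h
    · exact ⟨1, rfl, by rw [h, zpow_one]⟩
    · exact ⟨-1, rfl, by rw [h, zpow_neg_one]⟩
  exact ⟨injective_of_isUnit_inducedDet φ hp hφ₁ hdet,
    surjective_of_isUnit_inducedDet φ hp hφ₁ hdet⟩

end Endomorphism

lemma odd_y_add_z_of_mul_eq {P A : NormalForm} (hP : P = e₁ ∨ P = e₁⁻¹)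
    (h : A * P = P⁻¹ * A) : Odd (A.y + A.z) := by
  rw [← Int.negOnePow_eq_neg_one_iff, ← Units.val_eq_neg_one]
  have h := congrArg NormalForm.x h
  rcases hP with rfl | rfl <;> simp [twist] at h <;> omega

lemma negOnePow_mul_twist {y z w : ℤ} (h : Odd (y + z)) :
    (y.negOnePow : ℤ) * twist z w = twist z w := by
  by_cases hy : Even y
  · rw [Int.negOnePow_even _ hy, Units.val_one, one_mul]
  · have hz : Even z := (by simpa [Int.odd_add] using h : Odd y ↔ Even z).mp
      (Int.not_even_iff_odd.mp hy)
    simp [twist, hz]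

lemma two_mul_sub_x_of_mul_eq {P B C : NormalForm} (hP : P.y = 0 ∧ P.z = 0)
    (hB : Odd (B.y + B.z)) (hC : Odd (C.y + C.z)) (hCB : C * B = P * B * C) :
    2 * (C.x - B.x) = P.x + twist B.z C.y - twist C.z B.y := by
  have h := congrArg NormalForm.x hCB
  simp only [mul_x, mul_y, mul_z, hP, zero_add, Int.negOnePow_zero, Units.val_one, one_mul,
    Int.negOnePow_odd _ hB, Int.negOnePow_odd _ hC, Units.val_neg, negOnePow_mul_twist hB,
    negOnePow_mul_twist hC, twist_zero_left, mul_zero, add_zero] at h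
  linear_combination h

lemma autFamily_of_relations {P B C : NormalForm} (hP : P = e₁ ∨ P = e₁⁻¹)
    (hB : B * P = P⁻¹ * B) (hC : C * P = P⁻¹ * C) (hCB : C * B = P * B * C) :
    AutFamily e₁ e₂ e₃ P B C B.x B.y B.z C.y C.z := by
  have hBodd := odd_y_add_z_of_mul_eq hP hB
  have hCodd := odd_y_add_z_of_mul_eq hP hC
  obtain ⟨hPx, hPyz⟩ : (P.x = 1 ∨ P.x = -1) ∧ P.y = 0 ∧ P.z = 0 := by
    rcases hP with rfl | rfl <;> simp [e₁_inv]
  have key := two_mul_sub_x_of_mul_eq hPyz hBodd hCodd hCB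
  have hB' := eq_e₁_zpow_mul_e₂_zpow_mul_e₃_zpow B
  have hC' (d : ℤ) (hd : C.x = d) : C = e₁ ^ d * e₂ ^ C.y * e₃ ^ C.z :=
    hd ▸ eq_e₁_zpow_mul_e₂_zpow_mul_e₃_zpow C
  rcases Int.even_or_odd B.y with hBy | hBy <;> rcases Int.even_or_odd C.y with hCy | hCy
  · rw [twist_of_even_right _ hCy, twist_of_even_right _ hBy] at key
    omega
  · have hBz : Odd B.z := by simpa using hBodd.sub_even hBy
    have hCz : Even C.z := by simpa using hCodd.sub_odd hCy
    rw [twist_of_odd_of_odd hBz hCy, twist_of_even_left hCz] at key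
    rcases hP with rfl | rfl
    · exact Or.inl ⟨rfl, hBy, hCz, hBz, hCy, hB', hC' _ (by simp at key; omega)⟩
    · exact Or.inr <| Or.inl
        ⟨rfl, hBy, hCz, hBz, hCy, hB', hC' _ (by simp [e₁_inv] at key; omega)⟩
  · have hBz : Even B.z := by simpa using hBodd.sub_odd hBy
    have hCz : Odd C.z := by simpa using hCodd.sub_even hCy
    rw [twist_of_even_left hBz, twist_of_odd_of_odd hCz hBy] at key
    rcases hP with rfl | rfl
    · exact Or.inr <| Or.inr <| Or.inl
        ⟨rfl, hBy, hCz, hBz, hCy, hB', hC' _ (by simp at key; omega)⟩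
    · exact Or.inr <| Or.inr <| Or.inr
        ⟨rfl, hBy, hCz, hBz, hCy, hB', hC' _ (by simp [e₁_inv] at key; omega)⟩
  · have hBz : Even B.z := by simpa using hBodd.sub_odd hBy
    have hCz : Even C.z := by simpa using hCodd.sub_odd hCy
    rw [twist_of_even_left hBz, twist_of_even_left hCz] at key
    omega

theorem bijective_iff_exists_autFamily (φ : NormalForm →* NormalForm) :
    Function.Bijective φ ↔ ∃ a e f h i : ℤ, (e * i - f * h = 1 ∨ e * i - f * h = -1) ∧
      AutFamily e₁ e₂ e₃ (φ e₁) (φ e₂) (φ e₃) a e f h i := by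
  constructor
  · intro hφ
    refine ⟨_, _, _, _, _, Int.isUnit_iff.mp (isUnit_inducedDet_of_surjective φ hφ.2),
      autFamily_of_relations (map_e₁_eq_or_of_bijective φ hφ) ?_ ?_ ?_⟩
    · rw [← map_inv, ← map_mul, ← map_mul, e₂_mul_e₁]
    · rw [← map_inv, ← map_mul, ← map_mul, e₃_mul_e₁]
    · rw [← map_mul, ← map_mul, ← map_mul, e₃_mul_e₂]
  · rintro ⟨a, e, f, h, i, hdet, hfam⟩
    obtain ⟨h₁, h₂, d, h₃⟩ := hfam.image_eq
    refine bijective_of_isUnit_inducedDet φ h₁ ?_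
    simpa [inducedDet, h₂, h₃, Int.isUnit_iff] using hdet

end NormalForm

section Presentation

local notation "G₃" => PresentedGroup polyZRelsB1
local notation "g₁" => (PresentedGroup.of 0 : G₃)
local notation "g₂" => (PresentedGroup.of 1 : G₃)
local notation "g₃" => (PresentedGroup.of 2 : G₃)

lemma semiconjBy_g₂_g₁ : SemiconjBy g₂ g₁ g₁⁻¹ := by
  have h := PresentedGroup.one_of_mem (rels := polyZRelsB1)
    (x := FreeGroup.of 1 * FreeGroup.of 0 * (FreeGroup.of 1)⁻¹ * FreeGroup.of 0)
    (by simp [polyZRelsB1])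
  exact semiconjBy_of_mul_mul_inv_mul_eq_one h

lemma semiconjBy_g₃_g₁ : SemiconjBy g₃ g₁ g₁⁻¹ := by
  have h := PresentedGroup.one_of_mem (rels := polyZRelsB1)
    (x := FreeGroup.of 2 * FreeGroup.of 0 * (FreeGroup.of 2)⁻¹ * FreeGroup.of 0)
    (by simp [polyZRelsB1])
  exact semiconjBy_of_mul_mul_inv_mul_eq_one h

lemma semiconjBy_g₃_g₂ : SemiconjBy g₃ g₂ (g₁ * g₂) := by
  have h := PresentedGroup.one_of_mem (rels := polyZRelsB1)
    (x := FreeGroup.of 2 * FreeGroup.of 1 * (FreeGroup.of 2)⁻¹ * (FreeGroup.of 1)⁻¹ *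
      (FreeGroup.of 0)⁻¹) (by simp [polyZRelsB1])
  have h' : g₃ * g₂ * g₃⁻¹ * (g₂⁻¹ * g₁⁻¹) = 1 := by rw [← mul_assoc]; exact h
  simpa using semiconjBy_of_mul_mul_inv_mul_eq_one h'

lemma semiconjBy_g₃_inv_g₂ : SemiconjBy g₃⁻¹ g₂ (g₁ * g₂) := by
  have h : SemiconjBy g₃ (g₁ * g₂) g₂ := by
    simpa using semiconjBy_g₃_g₁.mul_right semiconjBy_g₃_g₂
  exact h.inv_symm_left

lemma exists_eq_zpow_mul_zpow_mul_zpow (g : G₃) :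
    ∃ x y z : ℤ, g = g₁ ^ x * g₂ ^ y * g₃ ^ z := by
  have h₂ := SemiconjBy.mul_zpow_of_inv semiconjBy_g₂_g₁
  have h₂' := SemiconjBy.mul_zpow_of_inv (SemiconjBy.inv_left_of_inv semiconjBy_g₂_g₁)
  have h₃ := SemiconjBy.mul_zpow_of_inv semiconjBy_g₃_g₁
  have h₃' := SemiconjBy.mul_zpow_of_inv (SemiconjBy.inv_left_of_inv semiconjBy_g₃_g₁)
  have h₁₂ := SemiconjBy.mul_zpow_eq_of_inv semiconjBy_g₂_g₁
  have hg : g ∈ Subgroup.closure (Set.range PresentedGroup.of) := by simp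
  induction hg using Subgroup.closure_induction_left with
  | one => exact ⟨0, 0, 0, by simp⟩
  | mul_left s hs w _ ih =>
    obtain ⟨i, rfl⟩ := hs
    obtain ⟨x, y, z, rfl⟩ := ih
    fin_cases i <;> simp only [Fin.zero_eta, Fin.mk_one, Fin.reduceFinMk]
    · exact ⟨x + 1, y, z, by group⟩
    · refine ⟨-x, y + 1, z, ?_⟩
      rw [← mul_assoc, ← mul_assoc, h₂]
      group
    · refine ⟨-x + twist 1 y, y, z + 1, ?_⟩
      rw [← mul_assoc, ← mul_assoc, h₃, mul_assoc _ g₃,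
        (SemiconjBy.zpow_right semiconjBy_g₃_g₂ y).eq, h₁₂]
      group
  | inv_mul_cancel s hs w _ ih =>
    obtain ⟨i, rfl⟩ := hs
    obtain ⟨x, y, z, rfl⟩ := ih
    fin_cases i <;> simp only [Fin.zero_eta, Fin.mk_one, Fin.reduceFinMk]
    · exact ⟨x - 1, y, z, by group⟩
    · refine ⟨-x, y - 1, z, ?_⟩
      rw [← mul_assoc, ← mul_assoc, h₂']
      group
    · refine ⟨-x + twist 1 y, y, z - 1, ?_⟩
      rw [← mul_assoc, ← mul_assoc, h₃', mul_assoc _ g₃⁻¹,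
        (SemiconjBy.zpow_right semiconjBy_g₃_inv_g₂ y).eq, h₁₂]
      group

def toNormalForm : G₃ →* NormalForm :=
  PresentedGroup.toGroup (f := ![NormalForm.e₁, NormalForm.e₂, NormalForm.e₃]) (by
    intro r hr
    simp only [polyZRelsB1, Set.mem_insert_iff, Set.mem_singleton_iff] at hr
    rcases hr with rfl | rfl | rfl <;> ext <;> simp [twist])

@[simp] lemma toNormalForm_of_zero : toNormalForm g₁ = NormalForm.e₁ := PresentedGroup.toGroup.of _
@[simp] lemma toNormalForm_of_one : toNormalForm g₂ = NormalForm.e₂ := PresentedGroup.toGroup.of _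
@[simp] lemma toNormalForm_of_two : toNormalForm g₃ = NormalForm.e₃ := PresentedGroup.toGroup.of _

lemma toNormalForm_zpow_mul_zpow_mul_zpow (x y z : ℤ) :
    toNormalForm (g₁ ^ x * g₂ ^ y * g₃ ^ z) = ⟨x, y, z⟩ := by
  simp

lemma toNormalForm_bijective : Function.Bijective toNormalForm := by
  refine ⟨(injective_iff_map_eq_one _).mpr fun g hg => ?_,
    fun w => ⟨_, toNormalForm_zpow_mul_zpow_mul_zpow w.x w.y w.z⟩⟩
  obtain ⟨x, y, z, rfl⟩ := exists_eq_zpow_mul_zpow_mul_zpow g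
  rw [toNormalForm_zpow_mul_zpow_mul_zpow] at hg
  obtain ⟨rfl, rfl, rfl⟩ : x = 0 ∧ y = 0 ∧ z = 0 := by simpa [NormalForm.ext_iff] using hg
  simp

noncomputable def equivNormalForm : G₃ ≃* NormalForm :=
  MulEquiv.ofBijective _ toNormalForm_bijective

lemma equivNormalForm_of_zero : equivNormalForm g₁ = NormalForm.e₁ := toNormalForm_of_zero
lemma equivNormalForm_of_one : equivNormalForm g₂ = NormalForm.e₂ := toNormalForm_of_one
lemma equivNormalForm_of_two : equivNormalForm g₃ = NormalForm.e₃ := toNormalForm_of_two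

end Presentation

end PolyZB1

open PolyZB1

/-- In `G₃ = ⟨g₁, g₂, g₃ ∣ g₂g₁ = g₁⁻¹g₂, g₃g₁ = g₁⁻¹g₃, g₃g₂ = g₁g₂g₃⟩`, a
group homomorphism `ψ : G₃ →* G₃` is an automorphism (i.e. bijective) if and
only if there exist `a, e, f, h, i ∈ ℤ` with `e·i − f·h = ±1` such that
`ψ g₂ = g₁^{d₂} g₂^e g₃^f` and `ψ g₃ = g₁^{d₃} g₂^h g₃^i`, where the parities
and the values of `ψ g₁, d₂, d₃` fall into one of the four families
`α, β, γ, δ`. -/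
theorem polyZ_b1_aut_characterization
    (ψ : PresentedGroup polyZRelsB1 →* PresentedGroup polyZRelsB1) :
    letI G₃ := PresentedGroup polyZRelsB1
    letI g₁ : G₃ := PresentedGroup.of 0
    letI g₂ : G₃ := PresentedGroup.of 1
    letI g₃ : G₃ := PresentedGroup.of 2
    Function.Bijective ψ ↔
      ∃ (a e f h i : ℤ), (e * i - f * h = 1 ∨ e * i - f * h = -1) ∧
        ((ψ g₁ = g₁ ∧ Even e ∧ Even i ∧ Odd f ∧ Odd h ∧
            ψ g₂ = g₁ ^ a * g₂ ^ e * g₃ ^ f ∧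
            ψ g₃ = g₁ ^ (a + 1) * g₂ ^ h * g₃ ^ i) ∨
         (ψ g₁ = g₁⁻¹ ∧ Even e ∧ Even i ∧ Odd f ∧ Odd h ∧
            ψ g₂ = g₁ ^ a * g₂ ^ e * g₃ ^ f ∧
            ψ g₃ = g₁ ^ a * g₂ ^ h * g₃ ^ i) ∨
         (ψ g₁ = g₁ ∧ Odd e ∧ Odd i ∧ Even f ∧ Even h ∧
            ψ g₂ = g₁ ^ a * g₂ ^ e * g₃ ^ f ∧
            ψ g₃ = g₁ ^ a * g₂ ^ h * g₃ ^ i) ∨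
         (ψ g₁ = g₁⁻¹ ∧ Odd e ∧ Odd i ∧ Even f ∧ Even h ∧
            ψ g₂ = g₁ ^ a * g₂ ^ e * g₃ ^ f ∧
            ψ g₃ = g₁ ^ (a - 1) * g₂ ^ h * g₃ ^ i)) := by
  have key := NormalForm.bijective_iff_exists_autFamily
    ((equivNormalForm.toMonoidHom.comp ψ).comp equivNormalForm.symm.toMonoidHom)
  simp only [bijective_conj_iff, ← equivNormalForm_of_zero, ← equivNormalForm_of_one,
    ← equivNormalForm_of_two, MonoidHom.comp_apply, MulEquiv.coe_toMonoidHom,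
    MulEquiv.symm_apply_apply, autFamily_map_iff _ equivNormalForm.injective] at key
  exact key
end
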